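/- arXiv:1810.10464 — 2 statements merged into one kernel-verified Lean document; each statement's English description precedes it below -/
import Mathlib

section
/- Let f = (f_n)_{n=0}^{31} be an arbitrary family of functions where f_n maps bit-strings of length n to a single bit, and let PP_f be the canonical prefix-preserving function. For every natural number j ≥ 1 and all a, b ∈ {0,1}^32, the j-fold iterate PP_f^j satisfies Q(PP_f^j(a), PP_f^j(b)) = Q(a,b), where Q denotes the longest common prefix length; in particular each iterate PP_f^j is prefix-preserving. -/
/-!
Bit `i` of `PP f a` is `a i` XOR-ed with a bit that depends only on the first `i` bits of `a`.
Hence, once `a` and `b` agree below `i`, `PP f a` and `PP f b` agree at `i` exactly when `a` and `b`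
do, and induction on the bit position shows that `PP f a`, `PP f b` agree on their first `k` bits
iff `a`, `b` do. So `PP f` preserves `Q` and `SharePrefix`, and both properties pass to iterates.
-/

def PP (f : (n : Fin 32) → (Fin (n : ℕ) → Bool) → Bool)
    (a : Fin 32 → Bool) : Fin 32 → Bool :=
  fun i => xor (a i) (f i (fun j => a ⟨j.val, j.isLt.trans i.isLt⟩))

def Q (a b : Fin 32 → Bool) : ℕ :=
  Nat.findGreatest (fun k => ∀ i : Fin 32, i.val < k → a i = b i) 32

def SharePrefix (a b : Fin 32 → Bool) (k : ℕ) : Prop :=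
  (∀ i : Fin 32, i.val < k → a i = b i) ∧ ∀ h : k < 32, a ⟨k, h⟩ ≠ b ⟨k, h⟩

def PrefixPreserving (F : (Fin 32 → Bool) → (Fin 32 → Bool)) : Prop :=
  ∀ (a b : Fin 32 → Bool) (k : ℕ), SharePrefix a b k → SharePrefix (F a) (F b) k

namespace PrefixPreserving

theorem id : PrefixPreserving id := fun _ _ _ h => h

theorem comp {F G : (Fin 32 → Bool) → (Fin 32 → Bool)} (hF : PrefixPreserving F)
    (hG : PrefixPreserving G) : PrefixPreserving (F ∘ G) :=
  fun a b k h => hF _ _ k (hG a b k h)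

theorem iterate {F : (Fin 32 → Bool) → (Fin 32 → Bool)} (hF : PrefixPreserving F) :
    ∀ j : ℕ, PrefixPreserving F^[j]
  | 0 => PrefixPreserving.id
  | j + 1 => by
    rw [Function.iterate_succ']
    exact hF.comp (hF.iterate j)

end PrefixPreserving

section PP

variable (f : (n : Fin 32) → (Fin (n : ℕ) → Bool) → Bool) {a b : Fin 32 → Bool}

theorem PP_apply_eq_iff {i : Fin 32} (h : ∀ j : Fin 32, j.val < i.val → a j = b j) :
    PP f a i = PP f b i ↔ a i = b i := by
  have hprefix : (fun j : Fin i.val => a ⟨j.val, j.isLt.trans i.isLt⟩)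
      = (fun j : Fin i.val => b ⟨j.val, j.isLt.trans i.isLt⟩) :=
    funext fun j => h _ j.isLt
  simp only [PP, hprefix]
  cases a i <;> cases b i <;> simp

theorem PP_agree_below_iff (k : ℕ) :
    (∀ i : Fin 32, i.val < k → PP f a i = PP f b i) ↔ ∀ i : Fin 32, i.val < k → a i = b i := by
  constructor
  · intro hPP
    rintro ⟨i, hi⟩ hik
    induction i using Nat.strong_induction_on with
    | _ i ih =>
      refine (PP_apply_eq_iff f fun j hj => ?_).mp (hPP _ hik)
      exact ih j.val hj j.isLt (hj.trans hik)
  · intro h i hik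
    exact (PP_apply_eq_iff f fun j hj => h j (hj.trans hik)).mpr (h i hik)

theorem Q_PP : Q (PP f a) (PP f b) = Q a b := by
  simp only [Q, PP_agree_below_iff]

theorem Q_iterate_PP (j : ℕ) : Q ((PP f)^[j] a) ((PP f)^[j] b) = Q a b := by
  induction j with
  | zero => rfl
  | succ j ih => rw [Function.iterate_succ_apply', Function.iterate_succ_apply', Q_PP, ih]

theorem prefixPreserving_PP : PrefixPreserving (PP f) := by
  rintro a b k ⟨hagree, hdiffer⟩
  refine ⟨(PP_agree_below_iff f k).mpr hagree, fun hk hPP => hdiffer hk ?_⟩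
  exact (PP_apply_eq_iff f hagree).mp hPP

end PP

/-- Every `j`-fold iterate (`j ≥ 1`) of the canonical prefix-preserving
function preserves the longest common prefix length; in particular each
iterate is prefix-preserving. -/
theorem PP_iterate_preserves_prefix
    (f : (n : Fin 32) → (Fin (n : ℕ) → Bool) → Bool) :
    ∀ j : ℕ, 1 ≤ j →
      (∀ a b : Fin 32 → Bool, Q ((PP f)^[j] a) ((PP f)^[j] b) = Q a b) ∧
        PrefixPreserving ((PP f)^[j]) :=
  fun j _ => ⟨fun _ _ => Q_iterate_PP f j, (prefixPreserving_PP f).iterate j⟩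
end

section
/- (Lower bound on the indistinguishability parameter of scheme II) Let d, D, α be positive integers with 1 ≤ α ≤ d ≤ D, and let s : Fin d → ℕ be positive group sizes with ∑_j s_j = D. Then the real view candidate probability 𝒜 = α! · (∑_{A ⊆ Fin d, |A| = α} ∏_{j ∈ A} s_j) / (D(D−1)⋯(D−α+1)) satisfies 𝒜 ≤ (D/d)^α · ∏_{i=0}^{α−1} (d−i)/(D−i). Consequently, the indistinguishability parameter ε, defined by 𝒜 ≥ e^{−ε}, is lower-bounded by ln[(D^α/d^α) · ∏_{i=0}^{α−1} (d−i)/(D−i)] whenever that quantity is nonnegative. -/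
open Finset Real

/-! The numerator of `𝒜` is `α! e_α(s)`, with `e_α` the `α`-th elementary symmetric polynomial
of the group sizes. Maclaurin's inequality
`e_α(s) ≤ C(d, α) (D/d)^α` together with `α! C(d, α) = d(d-1)⋯(d-α+1)` gives the bound on `𝒜`.
Each factor `D(d-i) / (d(D-i))` of that bound is at most `1` because `d ≤ D`, so `𝒜 ≤ 1`;
hence `e^{-ε} ≤ 𝒜` forces `ε ≥ 0`, while the logarithm of the bound is `≤ 0`. -/

lemma pow_succ_add_mul_sub_le_pow_succ {q y : ℝ} (hq : 0 ≤ q) (hy : 0 ≤ y) (k : ℕ) :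
    q ^ (k + 1) + (k + 1) * q ^ k * (y - q) ≤ y ^ (k + 1) := by
  rcases hq.eq_or_lt with rfl | hq
  · cases k <;> simp [pow_nonneg hy]
  have bernoulli := one_add_mul_le_pow (a := y / q - 1) (by linarith [div_nonneg hy hq.le]) (k + 1)
  calc q ^ (k + 1) + (k + 1) * q ^ k * (y - q)
      = q ^ (k + 1) * (1 + ((k + 1 : ℕ) : ℝ) * (y / q - 1)) := by
        field_simp; push_cast; ring
    _ ≤ q ^ (k + 1) * (1 + (y / q - 1)) ^ (k + 1) := by gcongr
    _ = y ^ (k + 1) := by rw [add_sub_cancel, ← mul_pow, mul_div_cancel₀ _ hq.ne']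

lemma sum_powersetCard_succ_insert_prod {ι R : Type*} [DecidableEq ι] [CommSemiring R]
    {a : ι} {F : Finset ι} (ha : a ∉ F) (f : ι → R) (k : ℕ) :
    ∑ B ∈ (insert a F).powersetCard (k + 1), ∏ j ∈ B, f j =
      ∑ B ∈ F.powersetCard (k + 1), ∏ j ∈ B, f j + f a * ∑ B ∈ F.powersetCard k, ∏ j ∈ B, f j := by
  have not_mem : ∀ B ∈ F.powersetCard k, a ∉ B := fun B hB h =>
    ha ((mem_powersetCard.1 hB).1 h)
  have disj : Disjoint (F.powersetCard (k + 1)) ((F.powersetCard k).image (insert a)) := by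
    simp only [disjoint_left, mem_image, mem_powersetCard]
    rintro _ ⟨hBF, -⟩ ⟨C, -, rfl⟩
    exact ha (hBF (mem_insert_self a C))
  rw [powersetCard_succ_insert ha, sum_union disj, mul_sum,
    sum_image fun B hB C hC h => by
      simpa [erase_insert (not_mem B hB), erase_insert (not_mem C hC)] using congrArg (erase · a) h]
  exact congrArg _ (sum_congr rfl fun B hB => prod_insert (not_mem B hB))

/-- The induction step of Maclaurin's inequality, a point of value `x` joining `n` points of
mean `q`: after clearing `n + 1`, it is the tangent-line bound for `t ^ (k + 1)` at `q`. -/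
lemma choose_mul_pow_add_le (n k : ℕ) {q x : ℝ} (hq : 0 ≤ q) (hx : 0 ≤ x) :
    n.choose (k + 1) * q ^ (k + 1) + x * (n.choose k * q ^ k) ≤
      (n + 1).choose (k + 1) * ((n * q + x) / (n + 1)) ^ (k + 1) := by
  have hn : (0 : ℝ) < n + 1 := by positivity
  have hchoose : ((n + 1 : ℕ) : ℝ) * n.choose k = (n + 1).choose (k + 1) * (k + 1) := by
    exact_mod_cast Nat.add_one_mul_choose_eq n k
  have hpascal : ((n + 1).choose (k + 1) : ℝ) = n.choose k + n.choose (k + 1) := by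
    exact_mod_cast Nat.choose_succ_succ n k
  have tangent := pow_succ_add_mul_sub_le_pow_succ hq
    (div_nonneg (by positivity : 0 ≤ n * q + x) hn.le) k
  refine le_of_mul_le_mul_left ?_ hn
  push_cast at hchoose
  calc (n + 1 : ℝ) * (n.choose (k + 1) * q ^ (k + 1) + x * (n.choose k * q ^ k))
      = (n + 1).choose (k + 1) * ((n + 1) * q ^ (k + 1) + (k + 1) * q ^ k * (x - q)) := by
        linear_combination (x - q) * q ^ k * hchoose - (n + 1) * q ^ (k + 1) * hpascal
    _ ≤ (n + 1).choose (k + 1) * ((n + 1) * ((n * q + x) / (n + 1)) ^ (k + 1)) := by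
        gcongr
        calc (n + 1) * q ^ (k + 1) + (k + 1) * q ^ k * (x - q)
            = (n + 1) * (q ^ (k + 1) + (k + 1) * q ^ k * ((n * q + x) / (n + 1) - q)) := by
              field_simp; ring
          _ ≤ _ := by gcongr
    _ = (n + 1) * ((n + 1).choose (k + 1) * ((n * q + x) / (n + 1)) ^ (k + 1)) := by ring

/-- Maclaurin's inequality. -/
theorem sum_powersetCard_prod_le_choose_mul_mean_pow {ι : Type*} [DecidableEq ι]
    (F : Finset ι) {s : ι → ℝ} (hs : ∀ j ∈ F, 0 ≤ s j) (k : ℕ) :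
    ∑ B ∈ F.powersetCard k, ∏ j ∈ B, s j ≤ ((#F).choose k : ℝ) * ((∑ j ∈ F, s j) / #F) ^ k := by
  induction F using Finset.induction_on generalizing k with
  | empty =>
    rcases k with _ | k
    · simp
    · rw [powersetCard_eq_empty.2 (by simp)]; simp
  | @insert a F ha ih =>
    cases k with
    | zero => simp
    | succ k =>
      have hs' : ∀ j ∈ F, 0 ≤ s j := fun j hj => hs j (mem_insert_of_mem hj)
      have hsum : ∑ j ∈ F, s j = #F * ((∑ j ∈ F, s j) / #F) := by
        rcases F.eq_empty_or_nonempty with rfl | hF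
        · simp
        · rw [mul_div_cancel₀ _ (Nat.cast_ne_zero.2 (card_ne_zero.2 hF))]
      rw [sum_powersetCard_succ_insert_prod ha, card_insert_of_notMem ha, sum_insert ha,
        add_comm (s a), hsum]
      push_cast
      calc _ ≤ (#F).choose (k + 1) * ((∑ j ∈ F, s j) / #F) ^ (k + 1) +
            s a * ((#F).choose k * ((∑ j ∈ F, s j) / #F) ^ k) := by
            gcongr ?_ + _ * ?_
            · exact ih hs' _
            · exact hs a (mem_insert_self a F)
            · exact ih hs' _
        _ ≤ _ := choose_mul_pow_add_le _ _ (div_nonneg (sum_nonneg hs') (Nat.cast_nonneg _))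
            (hs a (mem_insert_self a F))

lemma cast_descFactorial_eq_prod_range_sub {n k : ℕ} (hk : k ≤ n) :
    (n.descFactorial k : ℝ) = ∏ i ∈ range k, ((n : ℝ) - i) := by
  rw [Nat.descFactorial_eq_prod_range, Nat.cast_prod]
  exact prod_congr rfl fun i hi => Nat.cast_sub ((mem_range.1 hi).le.trans hk)

lemma div_mul_sub_div_sub_le_one {d D i : ℝ} (hd : 0 ≤ d) (hdD : d ≤ D) (hi : 0 ≤ i)
    (hiD : i < D) : D / d * ((d - i) / (D - i)) ≤ 1 := by
  rcases hd.eq_or_lt with rfl | hd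
  · simp
  rw [div_mul_div_comm, div_le_one (mul_pos hd (by linarith))]
  nlinarith

lemma div_pow_mul_prod_range_sub_div_sub_le_one {d D α : ℕ} (hαd : α ≤ d) (hdD : d ≤ D) :
    ((D : ℝ) / d) ^ α * ∏ i ∈ range α, ((d : ℝ) - i) / ((D : ℝ) - i) ≤ 1 := by
  have hid : ∀ i ∈ range α, (i : ℝ) < d := fun i hi => by
    exact_mod_cast (mem_range.1 hi).trans_le hαd
  have hdD' : (d : ℝ) ≤ D := by exact_mod_cast hdD
  have hpow : ((D : ℝ) / d) ^ α = ∏ _i ∈ range α, (D : ℝ) / d := by rw [prod_const, card_range]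
  rw [hpow, ← prod_mul_distrib]
  refine prod_le_one (fun i hi => ?_) (fun i hi => ?_)
  · have := hid i hi
    exact mul_nonneg (by positivity) (div_nonneg (by linarith) (by linarith))
  · exact div_mul_sub_div_sub_le_one (Nat.cast_nonneg d) hdD' (Nat.cast_nonneg i)
      ((hid i hi).trans_le hdD')

theorem schemeII_epsilon_lower_bound_general (D d α : ℕ) (hαd : α ≤ d)
    (hdD : d ≤ D) (s : Fin d → ℕ)
    (hs : ∑ j, s j = D) (A : ℝ)
    (hA : A = (α.factorial *
        ∑ B ∈ Finset.powersetCard α (Finset.univ : Finset (Fin d)),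
          ∏ j ∈ B, (s j : ℝ)) /
      ∏ i ∈ Finset.range α, ((D : ℝ) - i)) :
    A ≤ ((D : ℝ) / d) ^ α * ∏ i ∈ Finset.range α, ((d : ℝ) - i) / ((D : ℝ) - i) ∧
      (0 ≤ Real.log (((D : ℝ) ^ α / (d : ℝ) ^ α) *
            ∏ i ∈ Finset.range α, ((d : ℝ) - i) / ((D : ℝ) - i)) →
        ∀ ε : ℝ, Real.exp (-ε) ≤ A →
          Real.log (((D : ℝ) ^ α / (d : ℝ) ^ α) *
              ∏ i ∈ Finset.range α, ((d : ℝ) - i) / ((D : ℝ) - i)) ≤ ε) := by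
  have maclaurin := sum_powersetCard_prod_le_choose_mul_mean_pow univ
    (s := fun j : Fin d => (s j : ℝ)) (fun j _ => Nat.cast_nonneg _) α
  rw [card_univ, Fintype.card_fin, ← Nat.cast_sum, hs] at maclaurin
  have descFactorial_d : (α.factorial * d.choose α : ℝ) = ∏ i ∈ range α, ((d : ℝ) - i) := by
    rw [← cast_descFactorial_eq_prod_range_sub hαd, Nat.descFactorial_eq_factorial_mul_choose]
    push_cast; ring
  have prod_D_pos : 0 < ∏ i ∈ range α, ((D : ℝ) - i) := prod_pos fun i hi => by
    have : (i : ℝ) < D := by exact_mod_cast (mem_range.1 hi).trans_le (hαd.trans hdD)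
    linarith
  have hAB : A ≤ ((D : ℝ) / d) ^ α * ∏ i ∈ range α, ((d : ℝ) - i) / ((D : ℝ) - i) := by
    calc A ≤ (α.factorial * ((d.choose α : ℝ) * ((D : ℝ) / d) ^ α)) /
          ∏ i ∈ range α, ((D : ℝ) - i) := by rw [hA]; gcongr
      _ = _ := by rw [prod_div_distrib, ← descFactorial_d]; field_simp
  have hB1 := div_pow_mul_prod_range_sub_div_sub_le_one hαd hdD
  refine ⟨hAB, fun _ ε hε => ?_⟩
  have exp_le_bound := hε.trans hAB
  have ε_nonneg : 0 ≤ ε := by simpa using Real.exp_le_one_iff.1 (exp_le_bound.trans hB1)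
  rw [← div_pow]
  exact (Real.log_nonpos ((Real.exp_pos _).le.trans exp_le_bound) hB1).trans ε_nonneg

/-- Lower bound on the indistinguishability parameter of scheme II.  With `D`
distinct IP addresses grouped into `d` prefix groups of positive sizes
`s j` (summing to `D`) and an adversary knowing `α` prefixes
(`1 ≤ α ≤ d ≤ D`), the real-view-candidate probability
`𝒜 = α! · (∑_{|A| = α} ∏_{j ∈ A} s j) / (D(D−1)⋯(D−α+1))` satisfies
`𝒜 ≤ (D/d)^α · ∏_{i=0}^{α−1} (d−i)/(D−i)`.  Consequently, whenever
`ln[(D^α/d^α) · ∏_{i=0}^{α−1} (d−i)/(D−i)]` is nonnegative, any `ε` with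
`𝒜 ≥ e^{−ε}` satisfies `ε ≥ ln[(D^α/d^α) · ∏_{i=0}^{α−1} (d−i)/(D−i)]`. -/
theorem schemeII_epsilon_lower_bound (D d α : ℕ) (hα : 1 ≤ α) (hαd : α ≤ d)
    (hdD : d ≤ D) (s : Fin d → ℕ) (hspos : ∀ j, 0 < s j)
    (hs : ∑ j, s j = D) (A : ℝ)
    (hA : A = (α.factorial *
        ∑ B ∈ Finset.powersetCard α (Finset.univ : Finset (Fin d)),
          ∏ j ∈ B, (s j : ℝ)) /
      ∏ i ∈ Finset.range α, ((D : ℝ) - i)) :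
    A ≤ ((D : ℝ) / d) ^ α * ∏ i ∈ Finset.range α, ((d : ℝ) - i) / ((D : ℝ) - i) ∧
      (0 ≤ Real.log (((D : ℝ) ^ α / (d : ℝ) ^ α) *
            ∏ i ∈ Finset.range α, ((d : ℝ) - i) / ((D : ℝ) - i)) →
        ∀ ε : ℝ, Real.exp (-ε) ≤ A →
          Real.log (((D : ℝ) ^ α / (d : ℝ) ^ α) *
              ∏ i ∈ Finset.range α, ((d : ℝ) - i) / ((D : ℝ) - i)) ≤ ε) :=
  schemeII_epsilon_lower_bound_general D d α hαd hdD s hs A hA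
end
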